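/- Let α, F ∈ ℂ with α ∉ ℤ∖{0} and F ≠ 0, let k ∈ ℤ∖{0}, a ∈ ℂ∖{0}, m ∈ ℂ, and let b, c ∈ ℂ satisfy kb = 1 and 1 − k + kFc = 0. On V define linear operators 𝕃_n, 𝕀_n by 𝕃_n(v_t) = t·v_{n+t} for t ≠ −n, 𝕃_n(v_{−n}) = −n(n+α)v_0, 𝕀_n(v_t) = 0 for t ≠ −n, 𝕀_n(v_{−n}) = nF·v_0, and define the linear map φ by φ(v_t) = aᵗ·m·v_{kt}. Then for all n ∈ ℤ: φ ∘ 𝕃_n = ((1/k)aⁿ·𝕃_{kn} + aⁿcn·𝕀_{kn}) ∘ φ and φ ∘ 𝕀_n = aⁿb·𝕀_{kn} ∘ φ; consequently (φ∘𝕃_n)(v_t) = t·a^{n+t}·m·v_{k(n+t)} for t ≠ −n, (φ∘𝕃_n)(v_{−n}) = −n(n+α)·m·v_0, (φ∘𝕀_n)(v_t) = 0 for t ≠ −n, and (φ∘𝕀_n)(v_{−n}) = nF·m·v_0. -/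

import Mathlib

/-- The ℂ-vector space with basis `{v t : t ∈ ℤ}` (finitely supported functions ℤ → ℂ). -/
abbrev V : Type := ℤ →₀ ℂ

/-- The basis vector `v t`. -/
noncomputable def v (t : ℤ) : V := Finsupp.single t 1

/-- The linear operator on `V` determined by its values on the basis vectors. -/
noncomputable def op (f : ℤ → V) : V →ₗ[ℂ] V := Finsupp.lift V ℂ ℤ f

/-- The operator `𝕃 n` of the module `B(α,F)`:
`𝕃 n (v t) = t v (n+t)` for `t ≠ -n`, `𝕃 n (v (-n)) = -n(n+α) v 0`. -/
noncomputable def Lop (α : ℂ) (n : ℤ) : V →ₗ[ℂ] V :=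
  op fun t => if t = -n then (-(n : ℂ) * (n + α)) • v 0 else (t : ℂ) • v (n + t)

/-- The operator `𝕀 n` of the module `B(α,F)`:
`𝕀 n (v t) = 0` for `t ≠ -n`, `𝕀 n (v (-n)) = nF • v 0`. -/
noncomputable def Iop (F : ℂ) (n : ℤ) : V →ₗ[ℂ] V :=
  op fun t => if t = -n then ((n : ℂ) * F) • v 0 else 0

/-- The twisting linear map `φ (v t) = aᵗ m • v (kt)`. -/
noncomputable def φmap (a m : ℂ) (k : ℤ) : V →ₗ[ℂ] V :=
  op fun t => (a ^ t * m) • v (k * t)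

/-!
Both sides of each identity are linear, so it suffices to compare them on a basis vector `v t`.
For `t ≠ -n` (equivalently `k t ≠ -(k n)`) only the generic formulas for `𝕃` and `𝕀` enter,
and `aⁿ aᵗ = aⁿ⁺ᵗ` settles it; at `t = -n` the factors `a⁻ⁿ aⁿ` cancel and the
relations `k b = 1`, `1 - k + k F c = 0` match the exceptional coefficients.
-/

@[simp]
lemma op_v (f : ℤ → V) (t : ℤ) : op f (v t) = f t := by
  rw [op, v, Finsupp.lift_apply, Finsupp.sum_single_index (by simp), one_smul]

lemma op_ext {f g : V →ₗ[ℂ] V} (h : ∀ t, f (v t) = g (v t)) : f = g :=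
  Finsupp.lhom_ext fun t s => by
    rw [← mul_one s, ← smul_eq_mul, ← Finsupp.smul_single, map_smul, map_smul]
    exact congrArg (s • ·) (h t)

lemma Lop_v_of_ne {α : ℂ} {n t : ℤ} (ht : t ≠ -n) : Lop α n (v t) = (t : ℂ) • v (n + t) := by
  simp [Lop, ht]

lemma Lop_v_neg (α : ℂ) (n : ℤ) : Lop α n (v (-n)) = (-(n : ℂ) * (n + α)) • v 0 := by
  simp [Lop]

lemma Iop_v_of_ne {F : ℂ} {n t : ℤ} (ht : t ≠ -n) : Iop F n (v t) = 0 := by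
  simp [Iop, ht]

lemma Iop_v_neg (F : ℂ) (n : ℤ) : Iop F n (v (-n)) = ((n : ℂ) * F) • v 0 := by
  simp [Iop]

lemma φmap_v (a m : ℂ) (k t : ℤ) : φmap a m k (v t) = (a ^ t * m) • v (k * t) := by
  simp [φmap]

lemma mul_ne_neg_mul {R : Type*} [Ring R] [NoZeroDivisors R] {k n t : R} (hk : k ≠ 0) (ht : t ≠ -n) : k * t ≠ -(k * n) := by
  rwa [← mul_neg, Ne, mul_right_inj' hk]

section Intertwine

variable {α F a m b c : ℂ} {k : ℤ}

lemma φmap_Lop_v_of_ne (n : ℤ) {t : ℤ} (ht : t ≠ -n) :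
    φmap a m k (Lop α n (v t)) = ((t : ℂ) * a ^ (n + t) * m) • v (k * (n + t)) := by
  rw [Lop_v_of_ne ht, map_smul, φmap_v, smul_smul, mul_assoc]

lemma φmap_Lop_v_neg (n : ℤ) : φmap a m k (Lop α n (v (-n))) = (-(n : ℂ) * (n + α) * m) • v 0 := by
  rw [Lop_v_neg, map_smul, φmap_v, smul_smul, zpow_zero, one_mul, mul_zero]

lemma φmap_Iop_v_of_ne (n : ℤ) {t : ℤ} (ht : t ≠ -n) : φmap a m k (Iop F n (v t)) = 0 := by
  rw [Iop_v_of_ne ht, map_zero]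

lemma φmap_Iop_v_neg (n : ℤ) : φmap a m k (Iop F n (v (-n))) = ((n : ℂ) * F * m) • v 0 := by
  rw [Iop_v_neg, map_smul, φmap_v, smul_smul, zpow_zero, one_mul, mul_zero]

lemma φmap_comp_Lop (hk : k ≠ 0) (ha : a ≠ 0) (hc : 1 - (k : ℂ) + k * F * c = 0) (n : ℤ) :
    φmap a m k ∘ₗ Lop α n
      = ((1 / (k : ℂ) * a ^ n) • Lop α (k * n) + (a ^ n * c * n) • Iop F (k * n)) ∘ₗ φmap a m k := by
  refine op_ext fun t => ?_
  rcases eq_or_ne t (-n) with rfl | ht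
  · rw [LinearMap.comp_apply, φmap_Lop_v_neg]
    simp only [LinearMap.comp_apply, LinearMap.add_apply, LinearMap.smul_apply, φmap_v, map_smul,
      mul_neg, Lop_v_neg, Iop_v_neg, smul_smul, ← add_smul]
    congr 1
    push_cast
    rw [zpow_neg]
    field_simp
    -- `k F c = k - 1` turns the coefficient `-n (k n + α)` coming from `𝕃 (k n)` into `-n (n + α)`.
    linear_combination (-(n ^ 2 * m)) * hc
  · have hkt := mul_ne_neg_mul hk ht
    rw [LinearMap.comp_apply, φmap_Lop_v_of_ne n ht]
    simp only [LinearMap.comp_apply, LinearMap.add_apply, LinearMap.smul_apply, φmap_v, map_smul,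
      Lop_v_of_ne hkt, Iop_v_of_ne hkt, smul_zero, add_zero, smul_smul, ← mul_add, zpow_add₀ ha]
    congr 1
    push_cast
    field_simp

lemma φmap_comp_Iop (hk : k ≠ 0) (ha : a ≠ 0) (hb : (k : ℂ) * b = 1) (n : ℤ) :
    φmap a m k ∘ₗ Iop F n = ((a ^ n * b) • Iop F (k * n)) ∘ₗ φmap a m k := by
  refine op_ext fun t => ?_
  rcases eq_or_ne t (-n) with rfl | ht
  · rw [LinearMap.comp_apply, φmap_Iop_v_neg]
    simp only [LinearMap.comp_apply, LinearMap.smul_apply, φmap_v, map_smul, mul_neg, Iop_v_neg,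
      smul_smul]
    congr 1
    push_cast
    rw [zpow_neg]
    field_simp
    linear_combination (-(n * F * m)) * hb
  · have hkt := mul_ne_neg_mul hk ht
    rw [LinearMap.comp_apply, φmap_Iop_v_of_ne n ht, LinearMap.comp_apply, φmap_v, map_smul,
      LinearMap.smul_apply, Iop_v_of_ne hkt, smul_zero, smul_zero]

end Intertwine

theorem B_aF_intertwine_general (α F : ℂ)
    (k : ℤ) (hk : k ≠ 0) (a : ℂ) (ha : a ≠ 0) (m b c : ℂ)
    (hb : (k : ℂ) * b = 1) (hc : 1 - (k : ℂ) + k * F * c = 0) :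
    (∀ n : ℤ, φmap a m k ∘ₗ Lop α n
        = ((1 / (k : ℂ) * a ^ n) • Lop α (k * n) + (a ^ n * c * n) • Iop F (k * n))
            ∘ₗ φmap a m k) ∧
    (∀ n : ℤ, φmap a m k ∘ₗ Iop F n = ((a ^ n * b) • Iop F (k * n)) ∘ₗ φmap a m k) ∧
    (∀ n t : ℤ, t ≠ -n → φmap a m k (Lop α n (v t))
        = ((t : ℂ) * a ^ (n + t) * m) • v (k * (n + t))) ∧
    (∀ n : ℤ, φmap a m k (Lop α n (v (-n))) = (-(n : ℂ) * (n + α) * m) • v 0) ∧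
    (∀ n t : ℤ, t ≠ -n → φmap a m k (Iop F n (v t)) = 0) ∧
    (∀ n : ℤ, φmap a m k (Iop F n (v (-n))) = ((n : ℂ) * F * m) • v 0) :=
  ⟨φmap_comp_Lop hk ha hc, φmap_comp_Iop hk ha hb, fun n _ => φmap_Lop_v_of_ne n,
    φmap_Lop_v_neg, fun n _ => φmap_Iop_v_of_ne n, φmap_Iop_v_neg⟩

theorem B_aF_intertwine (α F : ℂ) (hα : ∀ z : ℤ, z ≠ 0 → α ≠ (z : ℂ)) (hF : F ≠ 0)
    (k : ℤ) (hk : k ≠ 0) (a : ℂ) (ha : a ≠ 0) (m b c : ℂ)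
    (hb : (k : ℂ) * b = 1) (hc : 1 - (k : ℂ) + k * F * c = 0) :
    (∀ n : ℤ, φmap a m k ∘ₗ Lop α n
        = ((1 / (k : ℂ) * a ^ n) • Lop α (k * n) + (a ^ n * c * n) • Iop F (k * n))
            ∘ₗ φmap a m k) ∧
    (∀ n : ℤ, φmap a m k ∘ₗ Iop F n = ((a ^ n * b) • Iop F (k * n)) ∘ₗ φmap a m k) ∧
    (∀ n t : ℤ, t ≠ -n → φmap a m k (Lop α n (v t))
        = ((t : ℂ) * a ^ (n + t) * m) • v (k * (n + t))) ∧
    (∀ n : ℤ, φmap a m k (Lop α n (v (-n))) = (-(n : ℂ) * (n + α) * m) • v 0) ∧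
    (∀ n t : ℤ, t ≠ -n → φmap a m k (Iop F n (v t)) = 0) ∧
    (∀ n : ℤ, φmap a m k (Iop F n (v (-n))) = ((n : ℂ) * F * m) • v 0) :=
  B_aF_intertwine_general α F k hk a ha m b c hb hc
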